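/- arXiv:2602.22783 — 4 statements merged into one kernel-verified Lean document; each statement's English description precedes it below -/
import Mathlib

section
/- Let d ≥ 3 and k > 0. Define Φ(λ) = d·(1 - √(1 - 4(d-1)λ²k²))/(2(d-1)) for λ ∈ [0, 1/(2k√(d-1))]. Then sup{ λ ≥ 0 : Φ(λ) < 1 } = 1/(2k√(d-1)). Consequently the local survival critical parameter of the BRW on the homogeneous tree T_d with edge rates λk equals 1/(2k√(d-1)), which is strictly greater than the global critical parameter 1/(kd) whenever d ≥ 3. -/
open Real

/-! At `λ = 1/(2k√(d-1))` the radicand `1 - 4(d-1)λ²k²` vanishes, so `Φ(λ) = d/(2(d-1)) < 1`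
for `d ≥ 3`: the right endpoint of the domain of `Φ` lies in the set and is therefore its
supremum. The comparison with `1/(kd)` is `2√(d-1) < d`, i.e. `(√(d-1) - 1)² > 0`. -/

lemma four_mul_mul_one_div_sq_mul_sq {a : ℝ} (ha : 0 < a) {k : ℝ} (hk : k ≠ 0) :
    4 * a * (1 / (2 * k * √a)) ^ 2 * k ^ 2 = 1 := by
  have hsq : √a ^ 2 = a := sq_sqrt ha.le
  have hs : √a ≠ 0 := (sqrt_pos.mpr ha).ne'
  field_simp
  rw [hsq]
  ring

lemma two_mul_sqrt_sub_one_lt {x : ℝ} (hx : 2 < x) : 2 * √(x - 1) < x := by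
  have hsq : √(x - 1) ^ 2 = x - 1 := sq_sqrt (by linarith)
  have hne : √(x - 1) ≠ 1 := fun h => by nlinarith
  have hpos : 0 < (√(x - 1) - 1) ^ 2 := by positivity [sub_ne_zero.mpr hne]
  nlinarith

/-- On the homogeneous tree `T_d`, with `Φ(λ) = d(1-√(1-4(d-1)λ²k²))/(2(d-1))` defined for
`λ ∈ [0, 1/(2k√(d-1))]`, one has `sup{λ : Φ(λ) < 1} = 1/(2k√(d-1))`; this local critical
parameter is strictly larger than the global one, `1/(kd)`. -/
theorem tree_local_critical (d : ℕ) (hd : 3 ≤ d) (k : ℝ) (hk : 0 < k) :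
    sSup {l : ℝ | 0 ≤ l ∧ l ≤ 1 / (2 * k * Real.sqrt ((d : ℝ) - 1)) ∧
        (d : ℝ) * (1 - Real.sqrt (1 - 4 * ((d : ℝ) - 1) * l ^ 2 * k ^ 2)) /
          (2 * ((d : ℝ) - 1)) < 1}
      = 1 / (2 * k * Real.sqrt ((d : ℝ) - 1)) ∧
    1 / (k * (d : ℝ)) < 1 / (2 * k * Real.sqrt ((d : ℝ) - 1)) := by
  have hd2 : (2 : ℝ) < d := by exact_mod_cast hd
  have hd1 : (0 : ℝ) < d - 1 := by linarith
  have hs : 0 < √((d : ℝ) - 1) := sqrt_pos.mpr hd1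
  have hΦ : (d : ℝ) * (1 - √(1 - 4 * ((d : ℝ) - 1) * (1 / (2 * k * √((d : ℝ) - 1))) ^ 2 * k ^ 2))
      / (2 * ((d : ℝ) - 1)) < 1 := by
    rw [four_mul_mul_one_div_sq_mul_sq hd1 hk.ne', sub_self, sqrt_zero, sub_zero, mul_one,
      div_lt_one (by positivity)]
    linarith
  refine ⟨IsGreatest.csSup_eq ⟨⟨by positivity, le_rfl, hΦ⟩, fun l hl => hl.2.1⟩, ?_⟩
  rw [one_div_lt_one_div (by positivity) (by positivity), mul_comm 2 k, mul_assoc]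
  exact mul_lt_mul_of_pos_left (two_mul_sqrt_sub_one_lt hd2) hk
end

section
/- Let d ≥ 3, k > 0, and k₀₀ ≥ 0. Define Φ*(λ) = d(1-√(1-4(d-1)λ²k²))/(2(d-1)) + k₀₀λ. If k₀₀ ≤ k(d-2)/√(d-1), then Φ*(1/(2k√(d-1))) ≤ 1; hence sup{λ : Φ*(λ) < 1} = 1/(2k√(d-1)). -/
set_option maxHeartbeats 800000


open Real

/-- With a self-loop of rate `λ k₀₀` at the root, if `k₀₀ ≤ k(d-2)/√(d-1)`, then
`Φ*(1/(2k√(d-1))) ≤ 1`, hence `sup{λ : Φ*(λ) < 1} = 1/(2k√(d-1))`. -/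
theorem tree_loop_weak (d : ℕ) (hd : 3 ≤ d) (k k₀₀ : ℝ) (hk : 0 < k) (hk₀₀ : 0 ≤ k₀₀)
    (h : k₀₀ ≤ k * ((d : ℝ) - 2) / Real.sqrt ((d : ℝ) - 1)) :
    (d : ℝ) * (1 - Real.sqrt (1 - 4 * ((d : ℝ) - 1) *
        (1 / (2 * k * Real.sqrt ((d : ℝ) - 1))) ^ 2 * k ^ 2)) / (2 * ((d : ℝ) - 1))
      + k₀₀ * (1 / (2 * k * Real.sqrt ((d : ℝ) - 1))) ≤ 1 ∧
    sSup {l : ℝ | 0 ≤ l ∧ 4 * ((d : ℝ) - 1) * l ^ 2 * k ^ 2 ≤ 1 ∧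
        (d : ℝ) * (1 - Real.sqrt (1 - 4 * ((d : ℝ) - 1) * l ^ 2 * k ^ 2)) /
          (2 * ((d : ℝ) - 1)) + k₀₀ * l < 1}
      = 1 / (2 * k * Real.sqrt ((d : ℝ) - 1)) := by
  set D : ℝ := (d : ℝ) with hD
  have hd3 : (3 : ℝ) ≤ D := by rw [hD]; exact_mod_cast hd
  have hD1 : (0 : ℝ) < D - 1 := by linarith
  have hD0 : (0 : ℝ) < D := by linarith
  set s : ℝ := Real.sqrt (D - 1) with hsdef
  have hs : s ^ 2 = D - 1 := Real.sq_sqrt hD1.le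
  have hs0 : (0 : ℝ) < s := Real.sqrt_pos.mpr hD1
  set L : ℝ := 1 / (2 * k * s) with hLdef
  have hL : 0 < L := by positivity
  -- key algebraic fact : at L the discriminant vanishes
  have hx : 4 * (D - 1) * L ^ 2 * k ^ 2 = 1 := by
    rw [hLdef]
    field_simp
    nlinarith [hs, hs0, hk]
  have h1 : k₀₀ * s ≤ k * (D - 2) := (le_div_iff₀ hs0).mp h
  have key : D / (2 * (D - 1)) + k₀₀ * L ≤ 1 := by
    have e : D / (2 * (D - 1)) + k₀₀ * L
        = (D * k * s + k₀₀ * (D - 1)) / (2 * (D - 1) * k * s) := by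
      rw [hLdef]; field_simp
    rw [e, div_le_one (by positivity)]
    nlinarith [mul_le_mul_of_nonneg_right h1 hs0.le, hs]
  -- Part 1
  have part1 : D * (1 - Real.sqrt (1 - 4 * (D - 1) * L ^ 2 * k ^ 2)) / (2 * (D - 1))
      + k₀₀ * L ≤ 1 := by
    rw [hx]
    simp only [sub_self, Real.sqrt_zero, sub_zero, mul_one]
    exact key
  refine ⟨part1, ?_⟩
  -- Part 2
  set S : Set ℝ := {l : ℝ | 0 ≤ l ∧ 4 * (D - 1) * l ^ 2 * k ^ 2 ≤ 1 ∧
      D * (1 - Real.sqrt (1 - 4 * (D - 1) * l ^ 2 * k ^ 2)) / (2 * (D - 1)) + k₀₀ * l < 1}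
    with hS
  have hmem : ∀ l : ℝ, 0 ≤ l → l < L → l ∈ S := by
    intro l hl0 hlL
    have hll : l ^ 2 < L ^ 2 := by nlinarith
    have hxlt : 4 * (D - 1) * l ^ 2 * k ^ 2 < 1 := by nlinarith [pow_pos hk 2]
    refine ⟨hl0, hxlt.le, ?_⟩
    have hsq : 0 < Real.sqrt (1 - 4 * (D - 1) * l ^ 2 * k ^ 2) :=
      Real.sqrt_pos.mpr (by linarith)
    have t1 : D * (1 - Real.sqrt (1 - 4 * (D - 1) * l ^ 2 * k ^ 2)) / (2 * (D - 1))
        < D / (2 * (D - 1)) := by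
      apply div_lt_div_of_pos_right ?_ (by linarith)
      nlinarith
    have t2 : k₀₀ * l ≤ k₀₀ * L := mul_le_mul_of_nonneg_left hlL.le hk₀₀
    linarith
  have hub : ∀ l ∈ S, l ≤ L := by
    intro l hl
    obtain ⟨hl0, hl2, -⟩ := hl
    by_contra hc
    push_neg at hc
    have hsq2 : L ^ 2 < l ^ 2 := by nlinarith
    have h4k : (0:ℝ) < 4 * (D - 1) * k ^ 2 := by positivity
    nlinarith [mul_lt_mul_of_pos_left hsq2 h4k]
  have hlub : IsLUB S L := by
    constructor
    · exact hub
    · intro b hb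
      apply le_of_forall_lt
      intro c hcL
      have hm0 : 0 ≤ max ((c + L) / 2) 0 := le_max_right _ _
      have hmL : max ((c + L) / 2) 0 < L := max_lt (by linarith) hL
      have hmS : max ((c + L) / 2) 0 ∈ S := hmem _ hm0 hmL
      have hcb : c < max ((c + L) / 2) 0 := lt_max_of_lt_left (by linarith)
      exact lt_of_lt_of_le hcb (hb hmS)
  exact hlub.csSup_eq ⟨0, hmem 0 le_rfl hL⟩
end

section
/- Let d ≥ 3, k > 0, k₀₀ ≥ 0 with k₀₀ > k(d-2)/√(d-1). Then λ* := ((d-2)k₀₀ + d√(k₀₀² + 4k²)) / (2((dk)² + (d-1)k₀₀²)) satisfies 0 < λ* < 1/(2k√(d-1)) and Φ*(λ*) = 1, where Φ*(λ) = d(1-√(1-4(d-1)λ²k²))/(2(d-1)) + k₀₀λ. -/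
open Real

set_option maxHeartbeats 1600000 in
/-- For a strong loop `k₀₀ > k(d-2)/√(d-1)`, the value
`λ* = ((d-2)k₀₀ + d√(k₀₀²+4k²)) / (2((dk)² + (d-1)k₀₀²))` satisfies
`0 < λ* < 1/(2k√(d-1))` and `Φ*(λ*) = 1`. -/
theorem tree_loop_strong (d : ℕ) (hd : 3 ≤ d) (k k₀₀ : ℝ) (hk : 0 < k) (hk₀₀ : 0 ≤ k₀₀)
    (h : k * ((d : ℝ) - 2) / Real.sqrt ((d : ℝ) - 1) < k₀₀) :
    let lstar : ℝ := (((d : ℝ) - 2) * k₀₀ + (d : ℝ) * Real.sqrt (k₀₀ ^ 2 + 4 * k ^ 2)) /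
      (2 * (((d : ℝ) * k) ^ 2 + ((d : ℝ) - 1) * k₀₀ ^ 2))
    0 < lstar ∧ lstar < 1 / (2 * k * Real.sqrt ((d : ℝ) - 1)) ∧
    (d : ℝ) * (1 - Real.sqrt (1 - 4 * ((d : ℝ) - 1) * lstar ^ 2 * k ^ 2)) /
        (2 * ((d : ℝ) - 1)) + k₀₀ * lstar = 1 := by
  intro lstar
  have hlam0 : lstar = (((d : ℝ) - 2) * k₀₀ + (d : ℝ) * Real.sqrt (k₀₀ ^ 2 + 4 * k ^ 2)) /
      (2 * (((d : ℝ) * k) ^ 2 + ((d : ℝ) - 1) * k₀₀ ^ 2)) := rfl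
  clear_value lstar
  set D : ℝ := (d : ℝ) with hDdef
  have hD : (3 : ℝ) ≤ D := by
    rw [hDdef]; exact_mod_cast hd
  set s : ℝ := Real.sqrt (D - 1) with hsdef
  have hs0 : 0 < s := Real.sqrt_pos.mpr (by linarith)
  have hs2 : s ^ 2 = D - 1 := Real.sq_sqrt (by linarith)
  set R : ℝ := Real.sqrt (k₀₀ ^ 2 + 4 * k ^ 2) with hRdef
  have hRnn : 0 ≤ k₀₀ ^ 2 + 4 * k ^ 2 := by positivity
  have hR2 : R ^ 2 = k₀₀ ^ 2 + 4 * k ^ 2 := Real.sq_sqrt hRnn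
  have hR0 : 0 < R := Real.sqrt_pos.mpr (by nlinarith)
  set A : ℝ := (D * k) ^ 2 + (D - 1) * k₀₀ ^ 2 with hAdef
  have hA0 : 0 < A := by
    have : 0 < (D * k) ^ 2 := by positivity
    nlinarith
  have h1 : k * (D - 2) < k₀₀ * s := by
    have := (div_lt_iff₀ hs0).mp h
    linarith
  have hk00 : 0 < k₀₀ := by nlinarith
  have h1sq : k ^ 2 * (D - 2) ^ 2 < k₀₀ ^ 2 * (D - 1) := by
    have hp : 0 < (k₀₀ * s - k * (D - 2)) * (k₀₀ * s + k * (D - 2)) :=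
      mul_pos (by linarith) (add_pos (mul_pos hk00 hs0) (mul_pos hk (by linarith)))
    have he : k₀₀ ^ 2 * s ^ 2 = k₀₀ ^ 2 * (D - 1) := by rw [hs2]
    nlinarith [hp, he]
  have hsq2 : (D * k) ^ 2 < (s * R) ^ 2 := by nlinarith [hR2, hs2]
  have h2 : D * k < s * R :=
    lt_of_pow_lt_pow_left₀ 2 (le_of_lt (mul_pos hs0 hR0)) hsq2
  have hkey : D * (D - 2) * k ^ 2 < (D - 1) * k₀₀ * R := by
    have hprod := mul_lt_mul'' h1 h2 (by nlinarith) (by positivity)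
    have he2 : k₀₀ * s * (s * R) = (D - 1) * k₀₀ * R := by
      linear_combination (k₀₀ * R) * hs2
    nlinarith [hprod, he2]
  set X : ℝ := (D - 1) * k₀₀ * R - D * (D - 2) * k ^ 2 with hXdef
  have hX0 : 0 < X := by rw [hXdef]; linarith
  have hident : A ^ 2 - (D - 1) * k ^ 2 * ((D - 2) * k₀₀ + D * R) ^ 2 = X ^ 2 := by
    rw [hXdef, hAdef]
    linear_combination (-(D - 1) * D ^ 2 * k ^ 2 - (D - 1) ^ 2 * k₀₀ ^ 2) * hR2
  have hlam : lstar = ((D - 2) * k₀₀ + D * R) / (2 * A) := hlam0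
  have hl0 : 0 < lstar := by
    rw [hlam]
    apply div_pos _ (by positivity)
    nlinarith
  have hsq : 1 - 4 * (D - 1) * lstar ^ 2 * k ^ 2 = (X / A) ^ 2 := by
    have e1 : 1 - 4 * (D - 1) * lstar ^ 2 * k ^ 2 =
        (A ^ 2 - (D - 1) * k ^ 2 * ((D - 2) * k₀₀ + D * R) ^ 2) / A ^ 2 := by
      rw [hlam]
      field_simp
      ring
    rw [e1, hident, div_pow]
  refine ⟨hl0, ?_, ?_⟩
  · have hpos : 0 < 1 - 4 * (D - 1) * lstar ^ 2 * k ^ 2 := by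
      rw [hsq]; positivity
    have h4 : (2 * k * s * lstar) ^ 2 < 1 ^ 2 := by
      have e : (2 * k * s * lstar) ^ 2 = 4 * (D - 1) * lstar ^ 2 * k ^ 2 := by
        have : (2 * k * s * lstar) ^ 2 = 4 * s ^ 2 * lstar ^ 2 * k ^ 2 := by ring
        rw [this, hs2]
      rw [e]; linarith
    have h5 : 2 * k * s * lstar < 1 :=
      lt_of_pow_lt_pow_left₀ 2 zero_le_one h4
    rw [lt_div_iff₀ (by positivity)]
    nlinarith
  · rw [hsq, Real.sqrt_sq (div_nonneg hX0.le hA0.le), hlam, hXdef, hAdef]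
    have hD1 : D - 1 ≠ 0 := ne_of_gt (by linarith)
    have hA' : (D * k) ^ 2 + (D - 1) * k₀₀ ^ 2 ≠ 0 := by rw [← hAdef]; exact hA0.ne'
    rw [one_sub_div hA', mul_div_assoc', mul_div_assoc', div_div, div_add_div _ _ (mul_ne_zero hA' (mul_ne_zero two_ne_zero hD1)) (mul_ne_zero two_ne_zero hA'), div_eq_one_iff_eq (mul_ne_zero (mul_ne_zero hA' (mul_ne_zero two_ne_zero hD1)) (mul_ne_zero two_ne_zero hA'))]
    ring
end

section
/- Let d ≥ 3, k > 0. Then k₀₀ = kd(d-2)/(d-1) is exactly the threshold at which the local critical parameter λ_s*(k₀₀) = ((d-2)k₀₀ + d√(k₀₀²+4k²))/(2((dk)² + (d-1)k₀₀²)) equals the global value 1/(kd): for k₀₀ in the range (k(d-2)/√(d-1), kd(d-2)/(d-1)) one has λ_s*(k₀₀) > 1/(kd), with equality λ_s*(k₀₀) = 1/(kd) at k₀₀ = kd(d-2)/(d-1), and λ_s*(k₀₀) < 1/(kd) for k₀₀ > kd(d-2)/(d-1). -/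
open Real

/-!
`λ_s*(k₀₀)` is the positive root of `A λ² - (d - 2) k₀₀ λ - 1` with `A = (dk)² + (d - 1) k₀₀²`,
since `((d - 2) k₀₀)² + 4A = d² (k₀₀² + 4k²)`. Hence `1/(kd) - λ_s*(k₀₀)` has the sign of the
quadratic at `1/(kd)`, which equals `k₀₀ ((d - 1) k₀₀ - kd(d - 2)) / (kd)²`.
-/

theorem sign_quadratic_eq_sign_sub_root {a b c μ : ℝ} (ha : 0 < a) (hc : 0 < c) (hμ : 0 ≤ μ) :
    SignType.sign (a * μ ^ 2 - b * μ - c) =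
      SignType.sign (μ - (b + √(b ^ 2 + 4 * a * c)) / (2 * a)) := by
  set s := √(b ^ 2 + 4 * a * c)
  have hs : s ^ 2 = b ^ 2 + 4 * a * c := sq_sqrt (by positivity)
  have hbs : b < s := abs_lt.1 (abs_lt_of_sq_lt_sq (by nlinarith) (sqrt_nonneg _)) |>.2
  have hroot : (b - s) / (2 * a) < μ :=
    (div_neg_of_neg_of_pos (by linarith) (by positivity)).trans_le hμ
  have hfactor : a * μ ^ 2 - b * μ - c =
      a * (μ - (b - s) / (2 * a)) * (μ - (b + s) / (2 * a)) := by
    field_simp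
    linear_combination hs
  rw [hfactor, sign_mul, sign_pos (mul_pos ha (sub_pos.2 hroot)), one_mul]

noncomputable def loopCriticalParam (d k x : ℝ) : ℝ :=
  ((d - 2) * x + d * √(x ^ 2 + 4 * k ^ 2)) / (2 * ((d * k) ^ 2 + (d - 1) * x ^ 2))

theorem loopCriticalParam_eq_root {d : ℝ} (hd : 0 ≤ d) (k x : ℝ) :
    loopCriticalParam d k x =
      ((d - 2) * x + √(((d - 2) * x) ^ 2 + 4 * ((d * k) ^ 2 + (d - 1) * x ^ 2) * 1)) /
        (2 * ((d * k) ^ 2 + (d - 1) * x ^ 2)) := by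
  have hdisc : ((d - 2) * x) ^ 2 + 4 * ((d * k) ^ 2 + (d - 1) * x ^ 2) * 1 =
      d ^ 2 * (x ^ 2 + 4 * k ^ 2) := by ring
  rw [loopCriticalParam, hdisc, sqrt_mul (sq_nonneg d), sqrt_sq hd]

theorem sign_inv_sub_loopCriticalParam {d k x : ℝ} (hd : 1 < d) (hk : 0 < k) (hx : 0 < x) :
    SignType.sign (1 / (k * d) - loopCriticalParam d k x) =
      SignType.sign (x - k * d * (d - 2) / (d - 1)) := by
  have hA : 0 < (d * k) ^ 2 + (d - 1) * x ^ 2 := by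
    have : 0 < d * k := by positivity
    positivity
  have hμ : 0 ≤ 1 / (k * d) := by positivity
  have hd1 : d - 1 ≠ 0 := by linarith
  rw [loopCriticalParam_eq_root (by linarith), ← sign_quadratic_eq_sign_sub_root hA one_pos hμ]
  have hvalue : ((d * k) ^ 2 + (d - 1) * x ^ 2) * (1 / (k * d)) ^ 2 - (d - 2) * x * (1 / (k * d)) - 1
      = (d - 1) * x / (k * d) ^ 2 * (x - k * d * (d - 2) / (d - 1)) := by
    field_simp
    ring
  have hcoeff : 0 < (d - 1) * x / (k * d) ^ 2 :=
    div_pos (mul_pos (by linarith) hx) (by positivity)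
  rw [hvalue, sign_mul, sign_pos hcoeff, one_mul]

/-- `k₀₀ = kd(d-2)/(d-1)` is exactly the threshold at which the local critical parameter
`λ_s*(k₀₀)` of the loop-modified tree BRW equals the global value `1/(kd)`. -/
theorem tree_loop_threshold (d : ℕ) (hd : 3 ≤ d) (k : ℝ) (hk : 0 < k) :
    let lstar : ℝ → ℝ := fun k₀₀ =>
      (((d : ℝ) - 2) * k₀₀ + (d : ℝ) * Real.sqrt (k₀₀ ^ 2 + 4 * k ^ 2)) /
        (2 * (((d : ℝ) * k) ^ 2 + ((d : ℝ) - 1) * k₀₀ ^ 2))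
    (∀ k₀₀ : ℝ, k * ((d : ℝ) - 2) / Real.sqrt ((d : ℝ) - 1) < k₀₀ →
      k₀₀ < k * (d : ℝ) * ((d : ℝ) - 2) / ((d : ℝ) - 1) →
      1 / (k * (d : ℝ)) < lstar k₀₀) ∧
    lstar (k * (d : ℝ) * ((d : ℝ) - 2) / ((d : ℝ) - 1)) = 1 / (k * (d : ℝ)) ∧
    (∀ k₀₀ : ℝ, k * (d : ℝ) * ((d : ℝ) - 2) / ((d : ℝ) - 1) < k₀₀ →
      lstar k₀₀ < 1 / (k * (d : ℝ))) := by
  intro lstar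
  have hd3 : (3 : ℝ) ≤ d := by exact_mod_cast hd
  have hsign (x : ℝ) (hx : 0 < x) :=
    sign_inv_sub_loopCriticalParam (d := d) (by linarith) hk hx
  have hthreshold : 0 < k * (d : ℝ) * ((d : ℝ) - 2) / ((d : ℝ) - 1) :=
    div_pos (mul_pos (by positivity) (by linarith)) (by linarith)
  refine ⟨fun x hlower hupper => ?_, ?_, fun x hupper => ?_⟩
  · have hx : 0 < x := lt_trans (div_pos (mul_pos hk (by linarith)) (sqrt_pos.2 (by linarith))) hlower
    have h := hsign x hx
    rw [sign_neg (sub_neg.2 hupper), sign_eq_neg_one_iff, sub_neg] at h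
    exact h
  · have h := hsign _ hthreshold
    rw [sub_self, _root_.sign_zero, _root_.sign_eq_zero_iff, sub_eq_zero] at h
    exact h.symm
  · have h := hsign x (hthreshold.trans hupper)
    rw [sign_pos (sub_pos.2 hupper), sign_eq_one_iff, sub_pos] at h
    exact h
end
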